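/- arXiv:0907.5059 — 2 statements merged into one kernel-verified Lean document; each statement's English description precedes it below -/
import Mathlib

section
/- For every integer n ≥ 5 there exists a non-associative loop of order n in which every element has a unique two-sided inverse. -/
/-!
For odd `k` the midpoint operation `(x, y) ↦ (x + y) / 2` on `ZMod k` is an idempotent
quasigroup. Adjoining an identity `e` and redefining `x * x = e` turns an idempotent quasigroup of
order `k` into a loop of order `k + 1` in which every element is its own inverse; for the midpoint
quasigroup it is not associative as soon as `3 ≠ 0`, because `(0 * 0) * 1 = 1` while
`0 * (0 * 1) = 1 / 4`. This covers the even orders `n ≥ 6`.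

For odd orders we prolong that loop along the transversal of cells `(x, x + 1)` (together with
`(e, e)`): a new element `∞` takes over these cells, their entries `x + 1 / 2` move to the row and
the column of `∞`, and `∞ * ∞ = e`. Inverses survive because no transversal cell other than
`(e, e)` holds `e`, and associativity fails since `∞ * (∞ * y) = y - 1`.
-/

/-- `m` is the operation of a NAFIL: a loop (two-sided identity, unique
solvability) in which every element has a unique two-sided inverse, and which
is non-associative. -/
def IsNAFILOp {M : Type} (m : M → M → M) : Prop :=
  ∃ e : M,
    (∀ a, m e a = a) ∧ (∀ a, m a e = a) ∧
    (∀ a b, ∃! x, m a x = b) ∧ (∀ a b, ∃! y, m y a = b) ∧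
    (∀ a, ∃! y, m a y = e ∧ m y a = e) ∧
    ¬ (∀ a b c, m (m a b) c = m a (m b c))

open Function

/-- Rows and columns are only required to be injective, which on a finite carrier is the unique
solvability of a loop. -/
structure IsInvertibleLoop {M : Type*} (m : M → M → M) (e : M) : Prop where
  id_mul : ∀ a, m e a = a
  mul_id : ∀ a, m a e = a
  injective_mul_left : ∀ a, Injective (m a)
  injective_mul_right : ∀ b, Injective fun a => m a b
  exists_inv : ∀ a, ∃ b, m a b = e ∧ m b a = e

theorem IsInvertibleLoop.isNAFILOp {M : Type} [Finite M] {m : M → M → M} {e : M}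
    (h : IsInvertibleLoop m e) (hna : ¬ Std.Associative m) : IsNAFILOp m := by
  refine ⟨e, h.id_mul, h.mul_id,
    fun a => (Finite.injective_iff_bijective.mp (h.injective_mul_left a)).existsUnique,
    fun b => (Finite.injective_iff_bijective.mp (h.injective_mul_right b)).existsUnique,
    fun a => ?_, fun hassoc => hna ⟨hassoc⟩⟩
  obtain ⟨b, hb⟩ := h.exists_inv a
  exact ⟨b, hb, fun c hc => h.injective_mul_left a (hc.1.trans hb.1.symm)⟩

theorem IsInvertibleLoop.transfer {M N : Type*} {m : M → M → M} {e : M}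
    (h : IsInvertibleLoop m e) (f : N ≃ M) :
    IsInvertibleLoop (fun a b => f.symm (m (f a) (f b))) (f.symm e) where
  id_mul a := by simp [h.id_mul]
  mul_id a := by simp [h.mul_id]
  injective_mul_left a := f.symm.injective.comp ((h.injective_mul_left (f a)).comp f.injective)
  injective_mul_right b :=
    f.symm.injective.comp ((h.injective_mul_right (f b)).comp f.injective)
  exists_inv a := by
    obtain ⟨b, hb⟩ := h.exists_inv (f a)
    exact ⟨f.symm b, by simp [hb]⟩

theorem Std.Associative.of_transfer {M N : Type*} {m : M → M → M} (f : N ≃ M)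
    (h : Std.Associative fun a b => f.symm (m (f a) (f b))) : Std.Associative m :=
  ⟨fun a b c => by simpa using congrArg f (h.assoc (f.symm a) (f.symm b) (f.symm c))⟩

theorem exists_isNAFILOp_fin_of_card_eq {M : Type} [Fintype M] {m : M → M → M} {e : M}
    (h : IsInvertibleLoop m e) (hna : ¬ Std.Associative m) {n : ℕ} (hn : Fintype.card M = n) :
    ∃ op : Fin n → Fin n → Fin n, IsNAFILOp op :=
  let f := (Fintype.equivFinOfCardEq hn).symm
  ⟨_, (h.transfer f).isNAFILOp (mt (Std.Associative.of_transfer f) hna)⟩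

theorem Option.injective_map_comp_swap {α β : Type*} [DecidableEq α] {f : α → β}
    (hf : Injective f) (a : α) : Injective (Option.map f ∘ Equiv.swap none (some a)) :=
  (Option.map_injective hf).comp (Equiv.injective _)

section AdjoinIdentity

variable {Q : Type*} [DecidableEq Q] {q : Q → Q → Q}

def adjoinIdentity (q : Q → Q → Q) : Option Q → Option Q → Option Q
  | none, b => b
  | some a, none => some a
  | some a, some b => if a = b then none else some (q a b)

theorem adjoinIdentity_some_left {a : Q} (ha : q a a = a) :
    adjoinIdentity q (some a) = Option.map (q a) ∘ Equiv.swap none (some a) := by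
  funext b
  rcases b with _ | b
  · simp [adjoinIdentity, ha]
  · by_cases hab : a = b <;> simp [adjoinIdentity, Equiv.swap_apply_def, hab, eq_comm]

theorem adjoinIdentity_some_right {b : Q} (hb : q b b = b) :
    (adjoinIdentity q · (some b)) = Option.map (q · b) ∘ Equiv.swap none (some b) := by
  funext a
  rcases a with _ | a
  · simp [adjoinIdentity, hb]
  · by_cases hab : a = b <;> simp [adjoinIdentity, Equiv.swap_apply_def, hab]

theorem isInvertibleLoop_adjoinIdentity (hidem : ∀ a, q a a = a) (hleft : ∀ a, Injective (q a))
    (hright : ∀ b, Injective fun a => q a b) :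
    IsInvertibleLoop (adjoinIdentity q) none where
  id_mul _ := rfl
  mul_id a := by cases a <;> rfl
  injective_mul_left a := by
    rcases a with _ | a
    · exact injective_id
    · rw [adjoinIdentity_some_left (hidem a)]
      exact Option.injective_map_comp_swap (hleft a) a
  injective_mul_right b := by
    rcases b with _ | b
    · intro a a' h; cases a <;> cases a' <;> exact h
    · rw [adjoinIdentity_some_right (hidem b)]
      exact Option.injective_map_comp_swap (hright b) b
  exists_inv a := ⟨a, by cases a <;> simp [adjoinIdentity]⟩

theorem not_associative_adjoinIdentity (hidem : ∀ a, q a a = a)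
    (hleft : ∀ a, Injective (q a)) {a b : Q} (hab : a ≠ b) (h : q a (q a b) ≠ b) :
    ¬ Std.Associative (adjoinIdentity q) := by
  rintro ⟨hassoc⟩
  have ha : a ≠ q a b := fun H => hab (hleft a ((hidem a).trans H))
  have := hassoc (some a) (some a) (some b)
  simp [adjoinIdentity, hab, ha] at this
  exact h this.symm

end AdjoinIdentity

section Prolongation

variable {M : Type*} [DecidableEq M] {m : M → M → M} {e : M} {τ : Equiv.Perm M}

/-- The new element is `none`; it takes over the cells `(x, τ x)` with `x ≠ e`. -/
def prolongation (m : M → M → M) (e : M) (τ : Equiv.Perm M) :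
    Option M → Option M → Option M
  | none, none => some e
  | none, some y => if y = e then none else some (m (τ.symm y) y)
  | some x, none => if x = e then none else some (m x (τ x))
  | some x, some y => if x ≠ e ∧ τ x = y then none else some (m x y)

theorem prolongation_some_left_of_ne {x : M} (hx : x ≠ e) :
    prolongation m e τ (some x) = Option.map (m x) ∘ Equiv.swap none (some (τ x)) := by
  funext b
  rcases b with _ | y
  · simp [prolongation, hx]
  · rcases eq_or_ne (τ x) y with rfl | hy
    · simp [prolongation, hx]
    · simp [prolongation, Equiv.swap_apply_def, hy, hy.symm]

theorem prolongation_some_right_of_ne (hτ : τ e = e) {y : M} (hy : y ≠ e) :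
    (prolongation m e τ · (some y)) =
      Option.map (m · y) ∘ Equiv.swap none (some (τ.symm y)) := by
  funext a
  rcases a with _ | x
  · simp [prolongation, hy]
  · by_cases hx : τ x = y
    · subst hx
      have : x ≠ e := by rintro rfl; exact hy hτ
      simp [prolongation, this]
    · simp [prolongation, Equiv.swap_apply_def, hx, Equiv.eq_symm_apply]

theorem prolongation_none_left (h : IsInvertibleLoop m e) (hτ : τ e = e) :
    prolongation m e τ none =
      Option.map (fun y => m (τ.symm y) y) ∘ Equiv.swap none (some e) := by
  funext b
  rcases b with _ | y
  · simp [prolongation, τ.symm_apply_eq.mpr hτ.symm, h.id_mul]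
  · rcases eq_or_ne y e with rfl | hy
    · simp [prolongation]
    · simp [prolongation, Equiv.swap_apply_def, hy]

theorem prolongation_none_right (h : IsInvertibleLoop m e) (hτ : τ e = e) :
    (prolongation m e τ · none) =
      Option.map (fun x => m x (τ x)) ∘ Equiv.swap none (some e) := by
  funext a
  rcases a with _ | x
  · simp [prolongation, hτ, h.id_mul]
  · rcases eq_or_ne x e with rfl | hx
    · simp [prolongation]
    · simp [prolongation, Equiv.swap_apply_def, hx]

theorem prolongation_some_id_mul (h : IsInvertibleLoop m e) (z : Option M) :
    prolongation m e τ (some e) z = z := by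
  rcases z with _ | y <;> simp [prolongation, h.id_mul]

theorem prolongation_mul_some_id (h : IsInvertibleLoop m e) (hτ : τ e = e) (z : Option M) :
    prolongation m e τ z (some e) = z := by
  rcases z with _ | x
  · simp [prolongation]
  · have : τ x = e ↔ x = e := τ.injective.eq_iff' hτ
    by_cases hx : x = e <;> simp [prolongation, h.mul_id, this, hx]

theorem prolongation_some_of_mul_eq (h : IsInvertibleLoop m e) (hτ : τ e = e)
    (hv : Injective fun x => m x (τ x)) {a b : M} (hab : m a b = e) :
    prolongation m e τ (some a) (some b) = some e := by
  have : ¬ (a ≠ e ∧ τ a = b) := by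
    rintro ⟨ha, rfl⟩
    exact ha (hv (by simp only [hab, hτ, h.id_mul]))
  simp [prolongation, this, hab]

theorem IsInvertibleLoop.prolongation (h : IsInvertibleLoop m e) (hτ : τ e = e)
    (hv : Injective fun x => m x (τ x)) :
    IsInvertibleLoop (prolongation m e τ) (some e) where
  id_mul := prolongation_some_id_mul h
  mul_id := prolongation_mul_some_id h hτ
  injective_mul_left a := by
    rcases a with _ | x
    · have hu : (fun y => m (τ.symm y) y) = (fun x => m x (τ x)) ∘ τ.symm := by
        funext y; simp
      rw [prolongation_none_left h hτ, hu]
      exact Option.injective_map_comp_swap (hv.comp τ.symm.injective) e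
    · by_cases hx : x = e
      · subst hx
        intro b c hbc
        rwa [prolongation_some_id_mul h, prolongation_some_id_mul h] at hbc
      · rw [prolongation_some_left_of_ne hx]
        exact Option.injective_map_comp_swap (h.injective_mul_left x) _
  injective_mul_right b := by
    rcases b with _ | y
    · rw [prolongation_none_right h hτ]
      exact Option.injective_map_comp_swap hv e
    · by_cases hy : y = e
      · subst hy
        intro a c hac
        simpa only [prolongation_mul_some_id h hτ] using hac
      · rw [prolongation_some_right_of_ne hτ hy]
        exact Option.injective_map_comp_swap (h.injective_mul_right y) _
  exists_inv a := by
    rcases a with _ | a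
    · exact ⟨none, rfl, rfl⟩
    · obtain ⟨b, hab, hba⟩ := h.exists_inv a
      exact ⟨some b, prolongation_some_of_mul_eq h hτ hv hab,
        prolongation_some_of_mul_eq h hτ hv hba⟩

theorem not_associative_prolongation (h : IsInvertibleLoop m e) {y z : M}
    (hy : y ≠ e) (hz : z ≠ e) (hyz : m (τ.symm y) y = z) (hzy : m (τ.symm z) z ≠ y) :
    ¬ Std.Associative (prolongation m e τ) := by
  rintro ⟨hassoc⟩
  have := hassoc none none (some y)
  simp [prolongation, h.id_mul, hy, hz, hyz] at this
  exact hzy this.symm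

end Prolongation

section AddOneOption

variable {G : Type*} [AddGroupWithOne G]

def addOneOption : Equiv.Perm (Option G) := (Equiv.addRight 1).optionCongr

theorem addOneOption_symm_some (a : G) : addOneOption.symm (some a) = some (a - 1) :=
  (Equiv.symm_apply_eq _).mpr (by simp [addOneOption])

end AddOneOption

section Midpoint

variable {R : Type*} [CommRing R] [Invertible (2 : R)]

theorem midpoint_injective_right (x : R) : Injective (midpoint R x) := fun y z hyz => by
  rw [← Equiv.pointReflection_midpoint_left (R := R) x y, hyz,
    Equiv.pointReflection_midpoint_left]

theorem midpoint_injective_left (y : R) : Injective fun x => midpoint R x y := by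
  simpa only [midpoint_comm (R := R) _ y] using midpoint_injective_right y

variable [DecidableEq R]

variable (R) in
def midpointLoop : Option R → Option R → Option R := adjoinIdentity (midpoint R)

theorem isInvertibleLoop_midpointLoop : IsInvertibleLoop (midpointLoop R) none :=
  isInvertibleLoop_adjoinIdentity (fun x => midpoint_self R x) midpoint_injective_right
    midpoint_injective_left

theorem not_associative_midpointLoop (h3 : (3 : R) ≠ 0) :
    ¬ Std.Associative (midpointLoop R) := by
  have : Nontrivial R := ⟨⟨3, 0, h3⟩⟩
  refine not_associative_adjoinIdentity (fun x => midpoint_self R x) midpoint_injective_right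
    (zero_ne_one (α := R)) fun H => h3 ?_
  simp only [midpoint_eq_smul_add, zero_add, smul_eq_mul, mul_one] at H
  linear_combination (-4) * H + (2 * ⅟2 + 1) * mul_invOf_self (2 : R)

variable [Nontrivial R]

theorem midpointLoop_apply_addOneOption :
    (fun x => midpointLoop R x (addOneOption x)) = Option.map (· + ⅟2) := by
  funext x
  rcases x with _ | a
  · rfl
  · have hne : a ≠ a + 1 := by simp
    simp only [midpointLoop, addOneOption, Equiv.optionCongr_apply, Option.map_some,
      Equiv.coe_addRight, adjoinIdentity, hne, if_false, midpoint_eq_smul_add, smul_eq_mul]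
    congr 1
    linear_combination a * mul_invOf_self (2 : R)

theorem midpointLoop_addOneOption_symm_some (a : R) :
    midpointLoop R (addOneOption.symm (some a)) (some a) = some (a - ⅟2) := by
  have hne : a - 1 ≠ a := by simp
  simp only [midpointLoop, addOneOption_symm_some, adjoinIdentity, hne, if_false,
    midpoint_eq_smul_add, smul_eq_mul]
  congr 1
  linear_combination a * mul_invOf_self (2 : R)

theorem isInvertibleLoop_prolongation_midpointLoop :
    IsInvertibleLoop (prolongation (midpointLoop R) none addOneOption) (some none) := by
  refine isInvertibleLoop_midpointLoop.prolongation rfl ?_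
  rw [midpointLoop_apply_addOneOption]
  exact Option.map_injective (add_left_injective _)

theorem not_associative_prolongation_midpointLoop :
    ¬ Std.Associative (prolongation (midpointLoop R) none addOneOption) := by
  refine not_associative_prolongation isInvertibleLoop_midpointLoop
    (y := some 0) (z := some (0 - ⅟2)) (by simp) (by simp)
    (midpointLoop_addOneOption_symm_some 0) ?_
  rw [midpointLoop_addOneOption_symm_some, sub_sub, invOf_two_add_invOf_two]
  simp

end Midpoint

theorem ZMod.isUnit_two_of_odd {m : ℕ} (hm : Odd m) : IsUnit (2 : ZMod m) := by
  exact_mod_cast (ZMod.isUnit_iff_coprime 2 m).mpr (Nat.coprime_two_left.mpr hm)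

theorem exists_isNAFILOp_of_even {n : ℕ} (hn : Even n) (h6 : 6 ≤ n) :
    ∃ op : Fin n → Fin n → Fin n, IsNAFILOp op := by
  have : NeZero (n - 1) := ⟨by omega⟩
  let := (ZMod.isUnit_two_of_odd (Nat.Even.sub_odd (by omega) hn odd_one)).invertible
  have h3 : (3 : ZMod (n - 1)) ≠ 0 := by
    have : ((3 : ℕ) : ZMod (n - 1)) ≠ 0 := by
      rw [Ne, ZMod.natCast_eq_zero_iff]
      exact fun h => by have := Nat.le_of_dvd (by norm_num) h; omega
    exact_mod_cast this
  exact exists_isNAFILOp_fin_of_card_eq isInvertibleLoop_midpointLoop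
    (not_associative_midpointLoop h3) (by simp; omega)

theorem exists_isNAFILOp_of_odd {n : ℕ} (hn : Odd n) (h5 : 5 ≤ n) :
    ∃ op : Fin n → Fin n → Fin n, IsNAFILOp op := by
  have : NeZero (n - 2) := ⟨by omega⟩
  have : Nontrivial (ZMod (n - 2)) := ZMod.nontrivial_iff.mpr (by omega)
  let := (ZMod.isUnit_two_of_odd (Nat.Odd.sub_even (by omega) hn even_two)).invertible
  exact exists_isNAFILOp_fin_of_card_eq
    (isInvertibleLoop_prolongation_midpointLoop (R := ZMod (n - 2)))
    not_associative_prolongation_midpointLoop (by simp; omega)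

/-- For every n ≥ 5 there exists a NAFIL of order n. -/
theorem nafil_exists_of_five_le (n : ℕ) (hn : 5 ≤ n) :
    ∃ op : Fin n → Fin n → Fin n, IsNAFILOp op := by
  rcases Nat.even_or_odd n with hev | hodd
  · exact exists_isNAFILOp_of_even hev (by obtain ⟨j, rfl⟩ := hev; omega)
  · exact exists_isNAFILOp_of_odd hodd hn
end

section
/- In a loop, the Moufang identity x*(y*(x*z)) = ((x*y)*x)*z implies the identity (x*y)*(z*x) = x*((y*z)*x). -/
/-- In a loop, the Moufang identity x(y(xz)) = ((xy)x)z implies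
(xy)(zx) = x((yz)x). -/
theorem moufang_implies_middle_identity {M : Type} [Mul M] [One M]
    (hL : ∀ a : M, 1 * a = a) (hR : ∀ a : M, a * 1 = a)
    (hx : ∀ a b : M, ∃! x, a * x = b) (hy : ∀ a b : M, ∃! y, y * a = b)
    (hM : ∀ x y z : M, x * (y * (x * z)) = ((x * y) * x) * z) :
    ∀ x y z : M, (x * y) * (z * x) = x * ((y * z) * x) := by
  -- cancellation
  have lc : ∀ a b c : M, a * b = a * c → b = c := fun a b c h =>
    (hx a (a * c)).unique h rfl
  have rc : ∀ a b c : M, b * a = c * a → b = c := fun a b c h =>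
    (hy a (c * a)).unique h rfl
  -- left inverse
  obtain ⟨i, hi⟩ := Classical.axiomOfChoice (fun a : M => (hy a 1).exists)
  -- flexibility
  have flex : ∀ a b : M, a * (b * a) = (a * b) * a := fun a b => by
    have h := hM a b 1
    rwa [hR, hR] at h
  -- two-sided inverse
  have hir : ∀ a : M, a * i a = 1 := fun a => by
    apply rc a
    rw [← flex, hi, hR, hL]
  -- left inverse property
  have lip : ∀ a b : M, i a * (a * b) = b := fun a b => by
    apply lc a
    have h := hM a (i a) b
    rwa [hir, hL] at h
  have inv_inv : ∀ a : M, i (i a) = a := fun a =>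
    lc (i a) _ _ (by rw [hir, hi])
  have lip' : ∀ a b : M, a * (i a * b) = b := fun a b => by
    have h := lip (i a) b
    rwa [inv_inv] at h
  -- right inverse property
  have rip : ∀ a b : M, (a * b) * i b = a := fun a b => by
    obtain ⟨c, hc⟩ := (hx b a).exists
    have h := hM b c (i b)
    rw [hir, hR] at h
    rw [hc] at h
    exact h.symm
  -- key autotopism identity
  have A : ∀ p a b : M, p * (a * b) = ((p * a) * p) * (i p * b) := fun p a b => by
    have h := hM p a (i p * b)
    rwa [lip' p b] at h
  have F' : ∀ p u v : M, p * u = ((p * (u * v)) * p) * (i p * i v) := fun p u v => by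
    have h := A p (u * v) (i v)
    rwa [rip u v] at h
  -- inverse of (i p * i v)
  have hit : ∀ p v : M, i (i p * i v) = v * p := fun p v => by
    apply lc p
    have h1 := F' p 1 v
    rw [hR, hL] at h1
    have h2 := rip ((p * v) * p) (i p * i v)
    rw [← h1] at h2
    rw [h2, ← flex]
  -- conclusion
  intro x y z
  have hF := F' x y z
  have h3 := rip ((x * (y * z)) * x) (i x * i z)
  rw [← hF, hit x z] at h3
  rw [h3, ← flex]
end
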